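/- Let Λ > 0 and let (μ, P, H) be an admissible triple in ℝ³ whose support is contained in the closed unit ball {x ∈ ℝ³ : |x| ≤ 1}. Writing W(μ) = ∫ |H|² dμ and W_Λ(μ) = W(μ) − Λ μ(ℝ³), the following three inequalities hold: (6) W_Λ(μ) ≥ μ(ℝ³) (1 − Λ); (7) W_Λ(μ) ≥ W(μ) (1 − Λ); (8) W(μ) ≥ μ(ℝ³). -/

import Mathlib

open MeasureTheory Metric Filter
open scoped RealInnerProductSpace ENNReal

noncomputable section

/-- Euclidean three-space. -/
abbrev E3 : Type := EuclideanSpace ℝ (Fin 3)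

/-- The support of a measure: points all of whose neighbourhoods have positive measure. -/
def mSupport (μ : Measure E3) : Set E3 := {x | ∀ r > 0, 0 < μ (ball x r)}

/-- An admissible triple `(μ, P, H)`: a finite compactly supported Borel measure, a measurable
family of maps which μ-a.e. are orthogonal projections onto 2-dimensional planes (idempotent,
symmetric, of rank two), and an `L²(μ)` generalized mean curvature `H` satisfying the first
variation identity `∫ trace(P x ∘ DX x) dμ = -2 ∫ ⟨X x, H x⟩ dμ` for every compactly supported
`C¹` vector field `X`. -/
structure IsAdmissible (μ : Measure E3) (P : E3 → E3 →L[ℝ] E3) (H : E3 → E3) : Prop where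
  finite : IsFiniteMeasure μ
  compact_support : IsCompact (mSupport μ)
  meas_P : ∀ v : E3, Measurable fun x => P x v
  meas_H : AEStronglyMeasurable H μ
  proj_ae : ∀ᵐ x ∂μ, (P x).comp (P x) = P x ∧
      (∀ u v : E3, ⟪P x u, v⟫ = ⟪u, P x v⟫) ∧
      Module.finrank ℝ (LinearMap.range ((P x : E3 →ₗ[ℝ] E3))) = 2
  memL2 : MemLp H 2 μ
  first_variation : ∀ X : E3 → E3, ContDiff ℝ 1 X → HasCompactSupport X →
      ∫ x, LinearMap.trace ℝ E3 ((P x).comp (fderiv ℝ X x) : E3 →ₗ[ℝ] E3) ∂μ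
        = -2 * ∫ x, ⟪X x, H x⟫ ∂μ

/-- The generalized mean curvature is perpendicular: `(P x) (H x) = 0` for μ-a.e. `x`. -/
def IsPerp (μ : Measure E3) (P : E3 → E3 →L[ℝ] E3) (H : E3 → E3) : Prop :=
  ∀ᵐ x ∂μ, P x (H x) = 0

/-- The Willmore energy of an admissible triple. -/
def Willmore (μ : Measure E3) (H : E3 → E3) : ℝ := ∫ x, ‖H x‖ ^ 2 ∂μ

/-- The mass of a measure. -/
def Mass (μ : Measure E3) : ℝ := (μ Set.univ).toReal

/-! Testing the first variation identity against the position vector field `X x = x` (cut off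
far from the support) gives `μ(ℝ³) = -∫ ⟨x, H x⟩ dμ`, since `trace (P x) = 2` a.e. If the support
lies in the unit ball, the right side is at most `∫ |H| dμ ≤ (μ(ℝ³) + W(μ)) / 2` by AM-GM, so
`μ(ℝ³) ≤ W(μ)`. Items (6) and (7) are then linear consequences for `Λ ≥ 0`. -/

theorem LinearMap.trace_eq_finrank_range_of_isIdempotentElem {K V : Type*} [Field K]
    [AddCommGroup V] [Module K V] [FiniteDimensional K V] {f : V →ₗ[K] V}
    (hf : IsIdempotentElem f) : trace K V f = Module.finrank K (range f) :=
  (isProj_range_iff_isIdempotentElem f).mpr hf |>.trace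

theorem exists_contDiff_hasCompactSupport_eqOn_id {F : Type*} [NormedAddCommGroup F]
    [NormedSpace ℝ F] [FiniteDimensional ℝ F] [HasContDiffBump F] (R : ℝ) :
    ∃ X : F → F, ContDiff ℝ 1 X ∧ HasCompactSupport X ∧ Set.EqOn X id (ball 0 R) := by
  let f : ContDiffBump (0 : F) := ⟨max R 1, max R 1 + 1, by positivity, by linarith⟩
  refine ⟨fun x => f x • x, f.contDiff.smul contDiff_id, f.hasCompactSupport.smul_right,
    fun x hx => ?_⟩
  have hxR : x ∈ closedBall (0 : F) (max R 1) :=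
    closedBall_subset_closedBall (le_max_left R 1) (ball_subset_closedBall hx)
  simp [f.one_of_mem_closedBall hxR]

theorem mSupport_eq_support (μ : Measure E3) : mSupport μ = μ.support := by
  ext x
  exact (nhds_basis_ball.mem_measureSupport).symm

theorem ae_mem_mSupport (μ : Measure E3) : ∀ᵐ x ∂μ, x ∈ mSupport μ := by
  rw [mSupport_eq_support]
  exact Measure.support_mem_ae

namespace IsAdmissible

variable {μ : Measure E3} {P : E3 → E3 →L[ℝ] E3} {H : E3 → E3}

theorem ae_trace_eq_two (hadm : IsAdmissible μ P H) :
    ∀ᵐ x ∂μ, LinearMap.trace ℝ E3 (P x : E3 →ₗ[ℝ] E3) = 2 := by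
  filter_upwards [hadm.proj_ae] with x hproj
  obtain ⟨hidem, -, hrank⟩ := hproj
  have hidem' : IsIdempotentElem (P x : E3 →ₗ[ℝ] E3) :=
    congrArg ContinuousLinearMap.toLinearMap hidem
  rw [LinearMap.trace_eq_finrank_range_of_isIdempotentElem hidem', hrank]
  norm_num

theorem mass_eq_neg_integral_inner (hadm : IsAdmissible μ P H) :
    Mass μ = -∫ x, ⟪x, H x⟫ ∂μ := by
  have := hadm.finite
  obtain ⟨R, hR⟩ := (isBounded_iff_subset_ball 0).mp hadm.compact_support.isBounded
  obtain ⟨X, hX, hXc, hXid⟩ := exists_contDiff_hasCompactSupport_eqOn_id (F := E3) R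
  have hX_ae : ∀ᵐ x ∂μ, x ∈ ball (0 : E3) R := (ae_mem_mSupport μ).mono fun x hx => hR hx
  have htrace : ∀ᵐ x ∂μ,
      LinearMap.trace ℝ E3 ((P x).comp (fderiv ℝ X x) : E3 →ₗ[ℝ] E3) = 2 := by
    filter_upwards [hadm.ae_trace_eq_two, hX_ae] with x htr hx
    rw [(hXid.eventuallyEq_of_mem (isOpen_ball.mem_nhds hx)).fderiv_eq, fderiv_id,
      ContinuousLinearMap.comp_id, htr]
  have hinner : ∀ᵐ x ∂μ, ⟪X x, H x⟫ = ⟪x, H x⟫ := by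
    filter_upwards [hX_ae] with x hx
    rw [hXid hx, id]
  have hfv := hadm.first_variation X hX hXc
  rw [integral_congr_ae htrace, integral_congr_ae hinner, integral_const, smul_eq_mul,
    measureReal_def] at hfv
  rw [Mass]
  linarith

end IsAdmissible

theorem two_mul_integral_norm_le_mass_add_willmore {μ : Measure E3} [IsFiniteMeasure μ]
    {H : E3 → E3} (hH : MemLp H 2 μ) :
    2 * ∫ x, ‖H x‖ ∂μ ≤ Mass μ + Willmore μ H := by
  have hsq : Integrable (fun x => ‖H x‖ ^ 2) μ := hH.norm.integrable_sq
  have hamgm : ∫ x, 2 * ‖H x‖ ∂μ ≤ ∫ x, 1 + ‖H x‖ ^ 2 ∂μ :=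
    integral_mono ((hH.integrable one_le_two).norm.const_mul 2) ((integrable_const 1).add hsq)
      fun x => by nlinarith [sq_nonneg (‖H x‖ - 1)]
  rwa [integral_const_mul, integral_add (integrable_const 1) hsq, integral_const, smul_eq_mul,
    mul_one, measureReal_def] at hamgm

theorem mass_le_willmore {μ : Measure E3} {P : E3 → E3 →L[ℝ] E3} {H : E3 → E3}
    (hadm : IsAdmissible μ P H) (hsupp : mSupport μ ⊆ closedBall 0 1) :
    Mass μ ≤ Willmore μ H := by
  have := hadm.finite
  have hbound : ∀ᵐ x ∂μ, ‖⟪x, H x⟫‖ ≤ ‖H x‖ := by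
    filter_upwards [ae_mem_mSupport μ] with x hx
    calc ‖⟪x, H x⟫‖ ≤ ‖x‖ * ‖H x‖ := norm_inner_le_norm _ _
      _ ≤ ‖H x‖ := mul_le_of_le_one_left (norm_nonneg _) (mem_closedBall_zero_iff.mp (hsupp hx))
  have hmass : Mass μ ≤ ∫ x, ‖H x‖ ∂μ := by
    rw [hadm.mass_eq_neg_integral_inner]
    exact (neg_le_abs _).trans
      (norm_integral_le_of_norm_le (hadm.memL2.integrable one_le_two).norm hbound)
  linarith [two_mul_integral_norm_le_mass_add_willmore hadm.memL2]

/-- items (6), (7) and (8) of Corollary 1.9 of the paper, for an admissible triple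
whose support is contained in the closed unit ball:
`W_Λ(μ) ≥ μ(ℝ³)(1 − Λ)`, `W_Λ(μ) ≥ W(μ)(1 − Λ)` and `W(μ) ≥ μ(ℝ³)`. -/
theorem unit_ball_inequalities (Λ : ℝ) (hΛ : 0 < Λ)
    (μ : Measure E3) (P : E3 → E3 →L[ℝ] E3) (H : E3 → E3)
    (hadm : IsAdmissible μ P H) (hsupp : mSupport μ ⊆ closedBall 0 1) :
    Willmore μ H - Λ * Mass μ ≥ Mass μ * (1 - Λ) ∧
    Willmore μ H - Λ * Mass μ ≥ Willmore μ H * (1 - Λ) ∧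
    Willmore μ H ≥ Mass μ := by
  have hW : Mass μ ≤ Willmore μ H := mass_le_willmore hadm hsupp
  have hΛW : Λ * Mass μ ≤ Λ * Willmore μ H := mul_le_mul_of_nonneg_left hW hΛ.le
  exact ⟨by linarith, by linarith, hW⟩

end
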